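/- Let n ≥ 3 and let S be a 4-cap-free, n-cup-free configuration. If S contains two interweaved laced (n-1)-cups, then S contains a weak (3, n-1)-gon. -/

import Mathlib

variable {α : Type*} [LinearOrder α]

/-- Every consecutive triple of the list satisfies `f`. -/
def Triples (f : α → α → α → Prop) : List α → Prop
  | x :: y :: z :: l => f x y z ∧ Triples f (y :: z :: l)
  | _ => True

/-- `l` is a cup in the configuration `(S, cup)`: a nonempty increasing list of
vertices of `S` all of whose consecutive triples are colored cup. -/
def IsCupIn (S : Finset α) (cup : α → α → α → Prop) (l : List α) : Prop :=
  l ≠ [] ∧ l.Chain' (· < ·) ∧ (∀ x ∈ l, x ∈ S) ∧ Triples cup l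

/-- `l` is a cap in the configuration `(S, cup)`. -/
def IsCapIn (S : Finset α) (cup : α → α → α → Prop) (l : List α) : Prop :=
  l ≠ [] ∧ l.Chain' (· < ·) ∧ (∀ x ∈ l, x ∈ S) ∧ Triples (fun x y z => ¬ cup x y z) l

/-- The configuration has no cap with `a` (or more) vertices. -/
def CapFree (S : Finset α) (cup : α → α → α → Prop) (a : ℕ) : Prop :=
  ∀ l : List α, IsCapIn S cup l → l.length < a

/-- The configuration has no cup with `b` (or more) vertices. -/
def CupFree (S : Finset α) (cup : α → α → α → Prop) (b : ℕ) : Prop :=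
  ∀ l : List α, IsCupIn S cup l → l.length < b

def StartsAt (l : List α) (p : α) : Prop := l.head? = some p

def EndsAt (l : List α) (p : α) : Prop := l.getLast? = some p

/-- A weak `(a, b)`-gon: an `a`-cap and a `b`-cup sharing both endpoints. -/
def HasWeakGon (S : Finset α) (cup : α → α → α → Prop) (a b : ℕ) : Prop :=
  ∃ (A U : List α) (x y : α), IsCapIn S cup A ∧ A.length = a ∧
    IsCupIn S cup U ∧ U.length = b ∧
    StartsAt A x ∧ StartsAt U x ∧ EndsAt A y ∧ EndsAt U y

/-- Two cups from `p` to `r` and from `q` to `s` are interweaved if `p < q ≤ r < s`. -/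
def Interweaved (C₁ C₂ : List α) : Prop :=
  ∃ p r q s, StartsAt C₁ p ∧ EndsAt C₁ r ∧ StartsAt C₂ q ∧ EndsAt C₂ s ∧
    p < q ∧ q ≤ r ∧ r < s

/-- A laced `(n-1)`-cup: an `(n-1)`-cup from `p` to `q` together with a cup ending
at `p` and a cup starting at `q` whose sizes sum to `n - 1`. -/
def IsLacedCup (S : Finset α) (cup : α → α → α → Prop) (n : ℕ) (C : List α) : Prop :=
  IsCupIn S cup C ∧ C.length = n - 1 ∧
  ∃ p q Cp Cq, StartsAt C p ∧ EndsAt C q ∧ IsCupIn S cup Cp ∧ IsCupIn S cup Cq ∧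
    EndsAt Cp p ∧ StartsAt Cq q ∧ Cp.length + Cq.length = n - 1

/-- A slope labeling of an `a`-cap-free configuration: labels in `{1, …, a-2}`
such that `s x y ≤ s y z` forces `x y z` to be a cup. -/
def IsSlopeLabeling (S : Finset α) (cup : α → α → α → Prop) (a : ℕ) (s : α → α → ℕ) : Prop :=
  (∀ x ∈ S, ∀ y ∈ S, x < y → 1 ≤ s x y ∧ s x y ≤ a - 2) ∧
  (∀ x ∈ S, ∀ y ∈ S, ∀ z ∈ S, x < y → y < z → s x y ≤ s y z → cup x y z)

/-- `α_i(p)`: maximum length of a cup ending at `p` with last edge of label `≤ i`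
(`1` if there is no such cup). -/
noncomputable def alphaStat (S : Finset α) (cup : α → α → α → Prop) (s : α → α → ℕ)
    (i : ℕ) (p : α) : ℕ :=
  max 1 (sSup {k | ∃ (l : List α) (x : α), IsCupIn S cup l ∧ EndsAt l p ∧
    l.length = k ∧ l.dropLast.getLast? = some x ∧ s x p ≤ i})

/-- `β(p)`: maximum length of a cup ending at `p` (`1` if there is none). -/
noncomputable def betaStat (S : Finset α) (cup : α → α → α → Prop) (p : α) : ℕ :=
  max 1 (sSup {k | ∃ l : List α, IsCupIn S cup l ∧ EndsAt l p ∧ l.length = k})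

/-- The cup coloring of the mirror reflection. -/
def opCup (cup : α → α → α → Prop) : αᵒᵈ → αᵒᵈ → αᵒᵈ → Prop :=
  fun x y z => cup (OrderDual.ofDual z) (OrderDual.ofDual y) (OrderDual.ofDual x)

/-- The vertex set of the mirror reflection. -/
def opSet (S : Finset α) : Finset αᵒᵈ := S.map OrderDual.toDual.toEmbedding

/-- The mirror reflection of a cap/cup. -/
def opList (l : List α) : List αᵒᵈ := (l.map OrderDual.toDual).reverse

/-! Let `C₁` run from `p` to `r` and `C₂` from `q` to `s`, let `t` precede `r` in `C₁` and `y`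
follow `q` in `C₂`. Since there is no `n`-cup, `p q y` and `t r s` are caps.

If `q < r`, a cap `p q r` or `q r s` closes a weak gon with `C₁` or `C₂`. Otherwise, by
4-cap-freeness every `w < p` makes `w p q` a cup and every `w > s` makes `r s w` a cup. Inserting
`q` between the two cups lacing `C₁` would then give an `n`-cup unless `q r b` is a cap for
some `b > r`; symmetrically `a q r` is a cap for some `a < q`, and `a q r b` is a 4-cap.

If `q = r`, replacing the last vertex of `C₁` by `y`, or the first vertex of `C₂` by `t`, gives an
`(n-1)`-cup closing a weak gon with the cap `p q y` or `t q s`, unless `w t y` and `t y w'` are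
caps for some `w < t < y < w'`, a 4-cap. -/

theorem exists_eq_append_pair_of_getLast? {β : Type*} {l : List β} {b : β}
    (h : l.getLast? = some b) (hl : 2 ≤ l.length) : ∃ D a, l = D ++ [a, b] := by
  obtain ⟨l, rfl⟩ := List.getLast?_eq_some_iff.1 h
  have hne : l ≠ [] := by rintro rfl; simp at hl
  refine ⟨l.dropLast, l.getLast hne, ?_⟩
  conv_lhs => rw [← List.dropLast_append_getLast hne]
  simp

theorem exists_eq_cons_cons_of_head? {β : Type*} {l : List β} {a : β}
    (h : l.head? = some a) (hl : 2 ≤ l.length) : ∃ b T, l = a :: b :: T := by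
  obtain ⟨_ | ⟨b, T⟩, rfl⟩ := List.head?_eq_some_iff.1 h
  · simp at hl
  · exact ⟨b, T, rfl⟩

theorem triples_cons_cons_iff {β : Type*} {f : β → β → β → Prop} {a b : β} {l : List β} :
    Triples f (a :: b :: l) ↔ (∀ c ∈ l.head?, f a b c) ∧ Triples f (b :: l) := by
  cases l <;> simp [Triples]

theorem triples_append_cons_iff {β : Type*} {f : β → β → β → Prop} {y : β} {l₂ : List β} :
    ∀ {l₁ : List β}, Triples f (l₁ ++ y :: l₂) ↔
      Triples f (l₁ ++ [y]) ∧ Triples f (y :: l₂) ∧ ∀ x ∈ l₁.getLast?, ∀ z ∈ l₂.head?, f x y z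
  | [] => by simp [Triples]
  | [a] => by simp [triples_cons_cons_iff, Triples, and_comm]
  | a :: b :: l₁ => by
    simp only [List.cons_append, triples_cons_cons_iff, List.getLast?_cons_cons]
    rw [← List.cons_append, triples_append_cons_iff, List.cons_append]
    simp only [List.head?_append, List.head?_cons]
    tauto

section Cups

variable {S : Finset α} {cup : α → α → α → Prop}

theorem isCupIn_iff {l : List α} : IsCupIn S cup l ↔
    l ≠ [] ∧ l.IsChain (· < ·) ∧ (∀ x ∈ l, x ∈ S) ∧ Triples cup l :=
  Iff.rfl

theorem isCupIn_append_cons_iff {l₁ l₂ : List α} {y : α} :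
    IsCupIn S cup (l₁ ++ y :: l₂) ↔ IsCupIn S cup (l₁ ++ [y]) ∧ IsCupIn S cup (y :: l₂) ∧
      ∀ x ∈ l₁.getLast?, ∀ z ∈ l₂.head?, cup x y z := by
  simp only [isCupIn_iff, ne_eq, List.append_eq_nil_iff, reduceCtorEq, and_false,
    not_false_eq_true, true_and, List.forall_mem_append, List.forall_mem_cons]
  rw [triples_append_cons_iff, List.isChain_split]
  simp only [List.not_mem_nil, IsEmpty.forall_iff, implies_true, and_true]
  tauto

theorem IsCupIn.mem {l : List α} (h : IsCupIn S cup l) {x : α} (hx : x ∈ l) : x ∈ S :=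
  h.2.2.1 x hx

theorem isCupIn_pair_iff {x y : α} : IsCupIn S cup [x, y] ↔ x ∈ S ∧ y ∈ S ∧ x < y := by
  simp [isCupIn_iff, Triples, and_comm, and_left_comm]

theorem isCupIn_cons_cons_iff {x y : α} {l : List α} :
    IsCupIn S cup (x :: y :: l) ↔
      x ∈ S ∧ x < y ∧ (∀ z ∈ l.head?, cup x y z) ∧ IsCupIn S cup (y :: l) := by
  rw [← List.singleton_append, isCupIn_append_cons_iff, List.singleton_append, isCupIn_pair_iff]
  simp only [List.getLast?_singleton, Option.mem_def, Option.some.injEq, forall_eq']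
  exact ⟨fun ⟨⟨hx, _, hxy⟩, hl, hj⟩ => ⟨hx, hxy, hj, hl⟩,
    fun ⟨hx, hxy, hj, hl⟩ => ⟨⟨hx, hl.mem List.mem_cons_self, hxy⟩, hl, hj⟩⟩

theorem IsCupIn.concat {l : List α} {x y : α} (hl : IsCupIn S cup (l ++ [x])) (hy : y ∈ S)
    (hxy : x < y) (hjoin : ∀ w ∈ S, w < x → cup w x y) : IsCupIn S cup (l ++ [x, y]) := by
  refine isCupIn_append_cons_iff.2 ⟨hl, isCupIn_pair_iff.2 ⟨hl.mem (by simp), hy, hxy⟩, ?_⟩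
  intro w hw z hz
  obtain ⟨l₀, rfl⟩ := List.getLast?_eq_some_iff.1 hw
  obtain rfl : z = y := by simpa using hz.symm
  rw [List.append_assoc, List.singleton_append, isCupIn_append_cons_iff, isCupIn_pair_iff] at hl
  exact hjoin w hl.2.1.1 hl.2.1.2.2

theorem IsCupIn.cons {l : List α} {x y : α} (hl : IsCupIn S cup (y :: l)) (hx : x ∈ S)
    (hxy : x < y) (hjoin : ∀ w ∈ S, y < w → cup x y w) : IsCupIn S cup (x :: y :: l) := by
  refine isCupIn_cons_cons_iff.2 ⟨hx, hxy, ?_, hl⟩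
  intro w hw
  obtain ⟨l₀, rfl⟩ := List.head?_eq_some_iff.1 hw
  rw [isCupIn_cons_cons_iff] at hl
  exact hjoin w (hl.2.2.2.mem (by simp)) hl.2.1

theorem CapFree.cup_or_cup (h4 : CapFree S cup 4) {a b c d : α} (ha : a ∈ S) (hb : b ∈ S)
    (hc : c ∈ S) (hd : d ∈ S) (hab : a < b) (hbc : b < c) (hcd : c < d) :
    cup a b c ∨ cup b c d := by
  by_contra! h
  have hcap : IsCapIn S cup [a, b, c, d] := by
    refine ⟨List.cons_ne_nil _ _, ?_, ?_, h.1, h.2, trivial⟩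
    · exact (show List.IsChain (· < ·) [a, b, c, d] by simp [hab, hbc, hcd])
    · simp [ha, hb, hc, hd]
  simpa using h4 _ hcap

theorem hasWeakGon_of_not_cup {x m y : α} {U : List α} (hx : x ∈ S) (hm : m ∈ S) (hy : y ∈ S)
    (hxm : x < m) (hmy : m < y) (hxmy : ¬ cup x m y) (hU : IsCupIn S cup U)
    (hUx : StartsAt U x) (hUy : EndsAt U y) : HasWeakGon S cup 3 U.length := by
  refine ⟨[x, m, y], U, x, y, ⟨List.cons_ne_nil _ _, ?_, ?_, hxmy, trivial⟩, rfl, hU, rfl,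
    rfl, hUx, rfl, hUy⟩
  · exact (show List.IsChain (· < ·) [x, m, y] by simp [hxm, hmy])
  · simp [hx, hm, hy]

def HasLace (S : Finset α) (cup : α → α → α → Prop) (m : ℕ) (x z : α) : Prop :=
  ∃ A B : List α, IsCupIn S cup A ∧ IsCupIn S cup B ∧ EndsAt A x ∧ StartsAt B z ∧
    A.length + B.length = m

theorem IsLacedCup.hasLace {n : ℕ} {C : List α} (hC : IsLacedCup S cup n C) {x z : α}
    (hx : StartsAt C x) (hz : EndsAt C z) : HasLace S cup (n - 1) x z := by
  obtain ⟨-, -, x', z', A, B, hx', hz', hA, hB, hAx, hBz, hlen⟩ := hC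
  obtain rfl : x' = x := Option.some.inj (hx'.symm.trans hx)
  obtain rfl : z' = z := Option.some.inj (hz'.symm.trans hz)
  exact ⟨A, B, hA, hB, hAx, hBz, hlen⟩

theorem HasLace.exists_not_cup {m n : ℕ} {x y z : α} (hlace : HasLace S cup m x z)
    (hfree : CupFree S cup n) (hn : n ≤ m + 1) (hy : y ∈ S) (hxy : x < y) (hyz : y < z)
    (hxyz : cup x y z) :
    (∃ w ∈ S, w < x ∧ ¬ cup w x y) ∨ (∃ w ∈ S, z < w ∧ ¬ cup y z w) := by
  obtain ⟨A, B, hA, hB, hAx, hBz, rfl⟩ := hlace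
  obtain ⟨A, rfl⟩ := List.getLast?_eq_some_iff.1 hAx
  obtain ⟨B, rfl⟩ := List.head?_eq_some_iff.1 hBz
  by_contra! hjoin
  have hcup : IsCupIn S cup ((A ++ [x]) ++ y :: z :: B) := by
    refine isCupIn_append_cons_iff.2 ⟨?_, hB.cons hy hyz hjoin.2, by simpa using hxyz⟩
    simpa using hA.concat hy hxy hjoin.1
  have := hfree _ hcup
  simp only [List.length_append, List.length_cons, List.length_nil] at this hn
  omega

theorem hasWeakGon_of_cups_meeting (h4 : CapFree S cup 4) {D T : List α} {p t q y s : α} {m : ℕ}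
    (hC₁ : IsCupIn S cup (D ++ [t, q])) (hC₂ : IsCupIn S cup (q :: y :: T))
    (hp : StartsAt (D ++ [t, q]) p) (hs : EndsAt (q :: y :: T) s) (hpq : p < q) (hqs : q < s)
    (hpqy : ¬ cup p q y) (htqs : ¬ cup t q s)
    (h₁ : (D ++ [t, q]).length = m) (h₂ : (q :: y :: T).length = m) : HasWeakGon S cup 3 m := by
  obtain ⟨hDt, htq, -⟩ := isCupIn_append_cons_iff.1 hC₁
  obtain ⟨htS, -, htq⟩ := isCupIn_pair_iff.1 htq
  obtain ⟨hqS, hqy, -, hyT⟩ := isCupIn_cons_cons_iff.1 hC₂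
  have hpS : p ∈ S := hC₁.mem (List.mem_of_mem_head? hp)
  have hsS : s ∈ S := hC₂.mem (List.mem_of_mem_getLast? hs)
  have hyS : y ∈ S := hyT.mem List.mem_cons_self
  by_cases hleft : ∀ w ∈ S, w < t → cup w t y
  · have hU := hDt.concat hyS (htq.trans hqy) hleft
    have hgon := hasWeakGon_of_not_cup hpS hqS hyS hpq hqy hpqy hU
      (by simpa [StartsAt] using hp) (by simp [EndsAt])
    simpa [← h₁] using hgon
  by_cases hright : ∀ w ∈ S, y < w → cup t y w
  · have hU := hyT.cons htS (htq.trans hqy) hright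
    have hgon := hasWeakGon_of_not_cup htS hqS hsS htq hqs htqs hU rfl (by simpa [EndsAt] using hs)
    simpa [← h₂] using hgon
  push Not at hleft hright
  obtain ⟨w, hwS, hwt, hwty⟩ := hleft
  obtain ⟨w', hw'S, hyw', htyw'⟩ := hright
  exact ((h4.cup_or_cup hwS htS hyS hw'S hwt (htq.trans hqy) hyw').elim hwty htyw').elim

theorem CupFree.not_cup_of_cons {n : ℕ} (hfree : CupFree S cup n) {l : List α} {p q y : α}
    (hl : IsCupIn S cup (q :: y :: l)) (hn : n ≤ l.length + 3) (hp : p ∈ S) (hpq : p < q) :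
    ¬ cup p q y := fun h => by
  have := hfree _ (isCupIn_cons_cons_iff.2 ⟨hp, hpq, by simpa using h, hl⟩)
  simp only [List.length_cons] at this
  omega

theorem CupFree.not_cup_of_concat {n : ℕ} (hfree : CupFree S cup n) {l : List α} {t r s : α}
    (hl : IsCupIn S cup (l ++ [t, r])) (hn : n ≤ l.length + 3) (hs : s ∈ S) (hrs : r < s) :
    ¬ cup t r s := fun h => by
  have hcup : IsCupIn S cup ((l ++ [t]) ++ r :: [s]) :=
    isCupIn_append_cons_iff.2 ⟨by simpa using hl, isCupIn_pair_iff.2 ⟨hl.mem (by simp), hs, hrs⟩,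
      by simpa using h⟩
  have := hfree _ hcup
  simp only [List.length_append, List.length_cons, List.length_nil] at this
  omega

theorem hasWeakGon_three_two (hfree : CupFree S cup 3) {p q s : α} (hp : p ∈ S) (hq : q ∈ S)
    (hs : s ∈ S) (hpq : p < q) (hqs : q < s) : HasWeakGon S cup 3 2 :=
  hasWeakGon_of_not_cup hp hq hs hpq hqs
    (hfree.not_cup_of_cons (l := []) (isCupIn_pair_iff.2 ⟨hq, hs, hqs⟩) le_rfl hp hpq)
    (isCupIn_pair_iff.2 ⟨hp, hs, hpq.trans hqs⟩) rfl rfl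

theorem not_cup_and_cup_of_hasLace (h4 : CapFree S cup 4) {m n : ℕ} (hfree : CupFree S cup n)
    (hn : n ≤ m + 1) {p q r s : α} (hpr : HasLace S cup m p r) (hqs : HasLace S cup m q s)
    (hqS : q ∈ S) (hrS : r ∈ S) (hpq : p < q) (hqr : q < r) (hrs : r < s)
    (hpq_ext : ∀ w ∈ S, w < p → cup w p q) (hrs_ext : ∀ w ∈ S, s < w → cup r s w) :
    ¬ (cup p q r ∧ cup q r s) := by
  rintro ⟨hpqr, hqrs⟩
  obtain ⟨b, hbS, hrb, hqrb⟩ := (hpr.exists_not_cup hfree hn hqS hpq hqr hpqr).resolve_left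
    fun ⟨w, hwS, hwp, hwpq⟩ => hwpq (hpq_ext w hwS hwp)
  obtain ⟨a, haS, haq, haqr⟩ := (hqs.exists_not_cup hfree hn hrS hqr hrs hqrs).resolve_right
    fun ⟨w, hwS, hsw, hrsw⟩ => hrsw (hrs_ext w hwS hsw)
  exact (h4.cup_or_cup haS hqS hrS hbS haq hqr hrb).elim haqr hqrb

end Cups

theorem stmt10 (n : ℕ) (hn : 3 ≤ n) (S : Finset α) (cup : α → α → α → Prop)
    (h4 : CapFree S cup 4) (hncf : CupFree S cup n)
    (C₁ C₂ : List α) (h1 : IsLacedCup S cup n C₁) (h2 : IsLacedCup S cup n C₂)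
    (hint : Interweaved C₁ C₂) :
    HasWeakGon S cup 3 (n - 1) := by
  obtain ⟨p, r, q, s, hC₁p, hC₁r, hC₂q, hC₂s, hpq, hqr, hrs⟩ := hint
  have hpS : p ∈ S := h1.1.mem (List.mem_of_mem_head? hC₁p)
  have hrS : r ∈ S := h1.1.mem (List.mem_of_mem_getLast? hC₁r)
  have hqS : q ∈ S := h2.1.mem (List.mem_of_mem_head? hC₂q)
  have hsS : s ∈ S := h2.1.mem (List.mem_of_mem_getLast? hC₂s)
  obtain rfl | hn4 : n = 3 ∨ 4 ≤ n := by omega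
  · exact hasWeakGon_three_two hncf hpS hqS hsS hpq (hqr.trans_lt hrs)
  have hlen₁ := h1.2.1
  have hlen₂ := h2.2.1
  obtain ⟨D, t, rfl⟩ := exists_eq_append_pair_of_getLast? hC₁r (by omega)
  obtain ⟨y, T, rfl⟩ := exists_eq_cons_cons_of_head? hC₂q (by omega)
  simp only [List.length_append, List.length_cons, List.length_nil] at hlen₁ hlen₂
  have htrs := hncf.not_cup_of_concat h1.1 (by omega) hsS hrs
  have hpqy := hncf.not_cup_of_cons h2.1 (by omega) hpS hpq
  rcases hqr.eq_or_lt with rfl | hqr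
  · exact hasWeakGon_of_cups_meeting h4 h1.1 h2.1 hC₁p hC₂s hpq hrs hpqy htrs h1.2.1 h2.2.1
  by_cases hpqr : cup p q r
  swap; · exact h1.2.1 ▸ hasWeakGon_of_not_cup hpS hqS hrS hpq hqr hpqr h1.1 hC₁p hC₁r
  by_cases hqrs : cup q r s
  swap; · exact h2.2.1 ▸ hasWeakGon_of_not_cup hqS hrS hsS hqr hrs hqrs h2.1 hC₂q hC₂s
  obtain ⟨htS, -, htr⟩ := isCupIn_pair_iff.1 (isCupIn_append_cons_iff.1 h1.1).2.1
  obtain ⟨-, hqy, -, hyT⟩ := isCupIn_cons_cons_iff.1 h2.1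
  have hyS : y ∈ S := hyT.mem List.mem_cons_self
  refine absurd ⟨hpqr, hqrs⟩ (not_cup_and_cup_of_hasLace h4 hncf (by omega) (h1.hasLace hC₁p hC₁r)
    (h2.hasLace hC₂q hC₂s) hqS hrS hpq hqr hrs ?_ ?_)
  · exact fun w hwS hwp => (h4.cup_or_cup hwS hpS hqS hyS hwp hpq hqy).resolve_right hpqy
  · exact fun w hwS hsw => (h4.cup_or_cup htS hrS hsS hwS htr hrs hsw).resolve_left htrs
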